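/- arXiv:1911.12746 — 4 statements merged into one kernel-verified Lean document; each statement's English description precedes it below -/
import Mathlib

section
/- For every integer m ≥ 0 there exist m+1 positive real numbers λ_{m,0}, …, λ_{m,m} such that the m-th derivative of the function x ↦ 1/((1-x)·ln(1-x)) on (0,1) equals (1/((1-x)^{m+1}·ln(1-x))) · Σ_{k=0}^{m} λ_{m,k}/ln^k(1-x). Moreover the coefficients satisfy the recurrence λ_{n+1,k} = (n+1)λ_{n,k} + k·λ_{n,k-1} with λ_{0,0} = 1 and λ_{n,-1} = λ_{n,n+1} = 0. -/
open Set Finset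

/-!
With `u = (1 - x)⁻¹` and `v = (log (1 - x))⁻¹` one has `u' = u²` and `v' = u v²`, so
`(u^(m+1) v^(k+1))' = (m+1) u^(m+2) v^(k+1) + (k+1) u^(m+2) v^(k+2)`. Differentiating
`∑ₖ λ_{m,k} u^(m+1) v^(k+1)` therefore produces the same shape with coefficients obeying
`λ_{m+1,k} = (m+1) λ_{m,k} + k λ_{m,k-1}`. This is the recurrence of `k! · [m+1, k+1]`, where
`[n, j]` is the unsigned Stirling number of the first kind, which gives positivity for `k ≤ m`.
-/

theorem Nat.stirlingFirst_succ_succ_pos {n k : ℕ} (hk : k ≤ n) :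
    0 < Nat.stirlingFirst (n + 1) (k + 1) := by
  induction n generalizing k with
  | zero => simp [Nat.le_zero.mp hk, Nat.stirlingFirst_self]
  | succ n ih =>
    rcases hk.lt_or_eq with hlt | rfl
    · rw [Nat.stirlingFirst_succ_succ]
      have := ih (Nat.lt_succ_iff.mp hlt)
      positivity
    · rw [Nat.stirlingFirst_self]
      exact Nat.one_pos

namespace InvMulLog

open Nat

def coeff (m k : ℕ) : ℕ := k ! * stirlingFirst (m + 1) (k + 1)

theorem coeff_zero_zero : coeff 0 0 = 1 := rfl

theorem coeff_eq_zero_of_lt {m k : ℕ} (h : m < k) : coeff m k = 0 := by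
  rw [coeff, stirlingFirst_eq_zero_of_lt (by omega), mul_zero]

theorem coeff_pos {m k : ℕ} (h : k ≤ m) : 0 < coeff m k :=
  Nat.mul_pos (factorial_pos k) (stirlingFirst_succ_succ_pos h)

theorem coeff_succ (m k : ℕ) : coeff (m + 1) k = (m + 1) * coeff m k + k * coeff m (k - 1) := by
  cases k with
  | zero => simp [coeff, stirlingFirst_succ_succ]
  | succ k =>
    simp only [coeff, stirlingFirst_succ_succ (m + 1), factorial_succ, add_tsub_cancel_right]
    ring

/-- Differentiating `∑ₖ coeff m k · c k` termwise and collecting gives the next row. -/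
theorem sum_coeff_succ_mul {R : Type*} [CommSemiring R] (m : ℕ) (c : ℕ → R) :
    ∑ k ∈ range (m + 2), (coeff (m + 1) k : R) * c k =
      ∑ k ∈ range (m + 1), (coeff m k : R) * ((m + 1) * c k + (k + 1) * c (k + 1)) := by
  have hsucc : ∀ k, (coeff (m + 1) k : R) * c k =
      (m + 1) * coeff m k * c k + k * coeff m (k - 1) * c k := fun k => by
    rw [coeff_succ]; push_cast; ring
  simp only [hsucc, mul_add, sum_add_distrib]
  congr 1
  · rw [sum_range_succ, coeff_eq_zero_of_lt (Nat.lt_succ_self m)]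
    simp only [Nat.cast_zero, mul_zero, zero_mul, add_zero]
    exact sum_congr rfl fun k _ => by ring
  · rw [sum_range_succ']
    simp only [Nat.cast_zero, zero_mul, add_zero, add_tsub_cancel_right]
    exact sum_congr rfl fun k _ => by push_cast; ring

noncomputable def monomial (m k : ℕ) (x : ℝ) : ℝ :=
  (1 - x)⁻¹ ^ (m + 1) * (Real.log (1 - x))⁻¹ ^ (k + 1)

noncomputable def closedForm (m : ℕ) (x : ℝ) : ℝ :=
  ∑ k ∈ range (m + 1), (coeff m k : ℝ) * monomial m k x

theorem hasDerivAt_monomial (m k : ℕ) {x : ℝ} (hx : Real.log (1 - x) ≠ 0) :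
    HasDerivAt (monomial m k)
      ((m + 1) * monomial (m + 1) k x + (k + 1) * monomial (m + 1) (k + 1) x) x := by
  have hx₁ : 1 - x ≠ 0 := (Real.log_ne_zero.mp hx).1
  have hsub : HasDerivAt (fun t : ℝ => 1 - t) (-1) x := (hasDerivAt_id x).const_sub 1
  have hu : HasDerivAt (fun t : ℝ => (1 - t)⁻¹) ((1 - x)⁻¹ ^ 2) x :=
    (hsub.fun_inv hx₁).congr_deriv (by field_simp)
  have hv : HasDerivAt (fun t : ℝ => (Real.log (1 - t))⁻¹)
      ((1 - x)⁻¹ * (Real.log (1 - x))⁻¹ ^ 2) x :=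
    ((hsub.log hx₁).fun_inv hx).congr_deriv (by field_simp)
  refine ((hu.fun_pow (m + 1)).fun_mul (hv.fun_pow (k + 1))).congr_deriv ?_
  simp only [monomial]
  push_cast
  ring

theorem hasDerivAt_closedForm (m : ℕ) {x : ℝ} (hx : Real.log (1 - x) ≠ 0) :
    HasDerivAt (closedForm m) (closedForm (m + 1) x) x := by
  have hsum := HasDerivAt.fun_sum fun k (_ : k ∈ range (m + 1)) =>
    (hasDerivAt_monomial m k hx).const_mul (coeff m k : ℝ)
  rw [closedForm, sum_coeff_succ_mul]
  exact hsum.congr_of_eventuallyEq (Filter.Eventually.of_forall fun t => by simp [closedForm])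

theorem eventually_log_one_sub_ne_zero {x : ℝ} (hx : Real.log (1 - x) ≠ 0) :
    ∀ᶠ y in nhds x, Real.log (1 - y) ≠ 0 :=
  ((continuous_const.sub continuous_id).continuousAt.log
    (Real.log_ne_zero.mp hx).1).eventually_ne hx

theorem iteratedDeriv_eq_closedForm (m : ℕ) {x : ℝ} (hx : Real.log (1 - x) ≠ 0) :
    iteratedDeriv m (fun t : ℝ => 1 / ((1 - t) * Real.log (1 - t))) x = closedForm m x := by
  induction m generalizing x with
  | zero => simp [closedForm, monomial, coeff_zero_zero, mul_comm]
  | succ m ih =>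
    have hev : iteratedDeriv m (fun t : ℝ => 1 / ((1 - t) * Real.log (1 - t))) =ᶠ[nhds x]
        closedForm m := (eventually_log_one_sub_ne_zero hx).mono fun y hy => ih hy
    rw [iteratedDeriv_succ, hev.deriv_eq, (hasDerivAt_closedForm m hx).deriv]

theorem closedForm_eq (m : ℕ) (x : ℝ) :
    closedForm m x = (1 / ((1 - x) ^ (m + 1) * Real.log (1 - x))) *
      ∑ k ∈ range (m + 1), (coeff m k : ℝ) / Real.log (1 - x) ^ k := by
  rw [closedForm, mul_sum]
  refine sum_congr rfl fun k _ => ?_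
  simp only [monomial, div_eq_mul_inv, one_mul, mul_inv, inv_pow, pow_succ]
  ring

end InvMulLog

open InvMulLog in
theorem stmt_0 :
    ∃ lam : ℕ → ℕ → ℝ,
      lam 0 0 = 1 ∧
      (∀ n k, k > n → lam n k = 0) ∧
      (∀ n k, lam (n + 1) k =
          (n + 1 : ℝ) * lam n k + (k : ℝ) * (if k = 0 then 0 else lam n (k - 1))) ∧
      (∀ m k, k ≤ m → 0 < lam m k) ∧
      (∀ (m : ℕ), ∀ x ∈ Set.Ioo (0 : ℝ) 1,
        iteratedDeriv m (fun t : ℝ => 1 / ((1 - t) * Real.log (1 - t))) x =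
          (1 / ((1 - x) ^ (m + 1) * Real.log (1 - x))) *
            ∑ k ∈ Finset.range (m + 1), lam m k / (Real.log (1 - x)) ^ k) := by
  refine ⟨fun m k => coeff m k, by simp [coeff_zero_zero],
    fun n k h => by simp [coeff_eq_zero_of_lt h], fun n k => ?_,
    fun m k h => Nat.cast_pos.mpr (coeff_pos h), fun m x ⟨hx₀, hx₁⟩ => ?_⟩
  · rcases eq_or_ne k 0 with rfl | hk
    · simp [coeff_succ]
    · simp [coeff_succ, hk]
  · have hlog : Real.log (1 - x) ≠ 0 :=
      Real.log_ne_zero_of_pos_of_ne_one (by linarith) (by linarith)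
    rw [iteratedDeriv_eq_closedForm m hlog, closedForm_eq]
end

section
/- Let m ≥ 1 and let x₀, x₁, …, x_{m-1} be real numbers. For each vector (y₀, …, y_{m-1}) ∈ ℝ^m there exists a unique polynomial A of degree at most m-1 such that A^{(k)}(x_k) = y_k for k = 0, 1, …, m-1. -/
/-!
The map `P ↦ (P(x₀), P'(x₁), …, P^{(m-1)}(x_{m-1}))` is linear from the `m`-dimensional space of
polynomials of degree `< m` to `Kᵐ`, so it suffices to show it is injective. If `P ≠ 0` has degree
`d < m`, then `P^{(d)}` is the nonzero constant `d! · lc(P)`, so it cannot vanish at `x_d`.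
-/

open Polynomial

namespace Polynomial

section Semiring

variable {R : Type*} [Semiring R]

theorem iterate_derivative_natDegree (p : R[X]) :
    derivative^[p.natDegree] p = C (p.natDegree.factorial • p.leadingCoeff) := by
  have hdeg : (derivative^[p.natDegree] p).natDegree = 0 :=
    Nat.eq_zero_of_le_zero ((natDegree_iterate_derivative p _).trans (Nat.sub_self _).le)
  rw [eq_C_of_natDegree_eq_zero hdeg, coeff_iterate_derivative, zero_add, Nat.descFactorial_self]
  rfl

theorem eq_zero_of_iterate_derivative_eval_eq_zero [Module.IsTorsionFree ℕ R] {m : ℕ}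
    {x : Fin m → R} {p : R[X]} (hp : p.degree < m)
    (h : ∀ k : Fin m, (derivative^[k] p).eval (x k) = 0) : p = 0 := by
  by_contra hp0
  have hd := h ⟨p.natDegree, (natDegree_lt_iff_degree_lt hp0).2 hp⟩
  rw [iterate_derivative_natDegree, eval_C] at hd
  exact smul_ne_zero (Nat.factorial_ne_zero _) (leadingCoeff_ne_zero.2 hp0) hd

end Semiring

section Field

variable {K : Type*} [Field K] {m : ℕ}

noncomputable def abelGoncharovMap (x : Fin m → K) : K[X]_m →ₗ[K] (Fin m → K) :=
  LinearMap.pi fun k => (leval (x k)).comp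
    (((derivative : K[X] →ₗ[K] K[X]) ^ (k : ℕ)).comp (degreeLT K m).subtype)

@[simp]
theorem abelGoncharovMap_apply (x : Fin m → K) (P : K[X]_m) (k : Fin m) :
    abelGoncharovMap x P k = (derivative^[k] (P : K[X])).eval (x k) := by
  simp [abelGoncharovMap, Module.End.pow_apply]

theorem abelGoncharovMap_bijective [CharZero K] (x : Fin m → K) :
    Function.Bijective (abelGoncharovMap x) := by
  have hinj : Function.Injective (abelGoncharovMap x) := by
    rw [← LinearMap.ker_eq_bot, LinearMap.ker_eq_bot']
    intro P hP
    exact Subtype.ext <| eq_zero_of_iterate_derivative_eval_eq_zero (mem_degreeLT.1 P.2)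
      fun k => by rw [← abelGoncharovMap_apply, hP, Pi.zero_apply]
  have hrank : Module.finrank K K[X]_m = Module.finrank K (Fin m → K) :=
    (degreeLTEquiv K m).finrank_eq
  exact ⟨hinj, (LinearMap.injective_iff_surjective_of_finrank_eq_finrank hrank).1 hinj⟩

theorem existsUnique_degree_lt_iterate_derivative_eval_eq [CharZero K] (x y : Fin m → K) :
    ∃! A : K[X], A.degree < m ∧ ∀ k : Fin m, (derivative^[k] A).eval (x k) = y k := by
  obtain ⟨hinj, hsurj⟩ := abelGoncharovMap_bijective x
  obtain ⟨P, hP⟩ := hsurj y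
  refine ⟨P, ⟨mem_degreeLT.1 P.2, fun k => by rw [← abelGoncharovMap_apply, hP]⟩, ?_⟩
  rintro B ⟨hB, hBy⟩
  have hBP : abelGoncharovMap x ⟨B, mem_degreeLT.2 hB⟩ = abelGoncharovMap x P :=
    _root_.funext fun k => by rw [hP, abelGoncharovMap_apply, hBy]
  exact congrArg Subtype.val (hinj hBP)

end Field

end Polynomial

theorem stmt_5_general (m : ℕ) (x y : Fin m → ℝ) :
    ∃! A : Polynomial ℝ, A.degree < m ∧
      ∀ k : Fin m, ((Polynomial.derivative)^[(k : ℕ)] A).eval (x k) = y k :=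
  existsUnique_degree_lt_iterate_derivative_eval_eq x y

theorem stmt_5 (m : ℕ) (hm : 1 ≤ m) (x y : Fin m → ℝ) :
    ∃! A : Polynomial ℝ, A.degree < m ∧
      ∀ k : Fin m, ((Polynomial.derivative)^[(k : ℕ)] A).eval (x k) = y k :=
  stmt_5_general m x y
end

section
/- Let α, β > -1, ℓ ≥ 1, ϖ = (ω₀,…,ω_{ℓ-1}) ∈ ℝ^ℓ, and let {p_n^{α,β}}_{n≥0} be the orthonormal Jacobi polynomials with respect to dμ^{α,β}(x) = (1-x)^α(1+x)^β dx on [-1,1]. Define q_n = G_{ϖ,n} (the n-th Goncharov polynomial associated with ϖ) for 0 ≤ n ≤ ℓ-1, and q_n(x) = the ℓ-fold iterated integral ∫_{ω₀}^x∫_{ω₁}^{s₁}⋯∫_{ω_{ℓ-1}}^{s_{ℓ-1}} p_{n-ℓ}^{α,β}(s_ℓ) ds_ℓ⋯ds₁ for n ≥ ℓ. Then {q_n}_{n≥0} is an orthonormal sequence with respect to the inner product ⟨f,g⟩_S = Σ_{k=0}^{ℓ-1} f^{(k)}(ω_k) g^{(k)}(ω_k) + ∫_{-1}^1 f^{(ℓ)}(x)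 g^{(ℓ)}(x) dμ^{α,β}(x), and each q_n has degree exactly n. -/
/-!
Write `q_n` as the polynomial obtained by integrating `1` (for `n < ℓ`) or `p_{n-ℓ}` (for
`n ≥ ℓ`) successively from the nodes `ω_{ℓ-1}, …, ω_0`. Its `k`-th derivative is the same
construction on the last nodes only, so it vanishes at `ω_k` unless `k = n`, where it is `1`;
its `ℓ`-th derivative is `0` for `n < ℓ` and `p_{n-ℓ}` for `n ≥ ℓ`. Hence the discrete part of
`⟨q_m, q_n⟩_S` is the Kronecker delta on the Goncharov block and the integral part is the
Jacobi orthonormality relation on the other block.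
-/

open Set MeasureTheory Finset

/-- Iterated integral of `g` with the list of lower limits `cs`. -/
noncomputable def iterIntF : List ℝ → (ℝ → ℝ) → (ℝ → ℝ)
  | [], g => g
  | c :: cs, g => fun s => ∫ t in c..s, iterIntF cs g t

/-- The Sobolev orthogonal polynomials: Goncharov polynomials for `n < ℓ`, and
`ℓ`-fold iterated integrals of the orthonormal Jacobi polynomials for `n ≥ ℓ`. -/
noncomputable def sobQ (ℓ : ℕ) (ω : ℕ → ℝ) (jp : ℕ → Polynomial ℝ) (n : ℕ) : ℝ → ℝ :=
  if n < ℓ then iterIntF ((List.range n).map ω) (fun _ => 1)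
  else iterIntF ((List.range ℓ).map ω) (fun t => (jp (n - ℓ)).eval t)

namespace Polynomial

variable {K : Type*} [Field K] [CharZero K]

theorem exists_derivative_eq (P : K[X]) : ∃ Q : K[X], derivative Q = P := by
  induction P using Polynomial.induction_on' with
  | add p q hp hq =>
    obtain ⟨P, rfl⟩ := hp
    obtain ⟨Q, rfl⟩ := hq
    exact ⟨P + Q, derivative_add⟩
  | monomial n a =>
    refine ⟨C (a / (n + 1)) * X ^ (n + 1), ?_⟩
    have hn : (n + 1 : K) ≠ 0 := by exact_mod_cast n.succ_ne_zero
    rw [derivative_C_mul_X_pow, ← C_mul_X_pow_eq_monomial]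
    push_cast
    rw [div_mul_cancel₀ a hn]

noncomputable def antideriv (P : K[X]) : K[X] :=
  (exists_derivative_eq P).choose

@[simp]
theorem derivative_antideriv (P : K[X]) : derivative (antideriv P) = P :=
  (exists_derivative_eq P).choose_spec

theorem natDegree_eq_natDegree_derivative_add_one {Q : K[X]} (hQ : derivative Q ≠ 0) :
    Q.natDegree = (derivative Q).natDegree + 1 := by
  have hQ₀ : Q.natDegree ≠ 0 := fun h => hQ (derivative_eq_zero.mpr h)
  rw [natDegree_derivative]
  omega

/-- `iterInt [c₀, …, c_{r-1}] P` is the `r`-fold antiderivative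
`∫_{c₀}^x ∫_{c₁}^{s₁} ⋯ ∫_{c_{r-1}}^{s_{r-1}} P`. -/
noncomputable def iterInt : List K → K[X] → K[X]
  | [], P => P
  | c :: cs, P => antideriv (iterInt cs P) - C ((antideriv (iterInt cs P)).eval c)

@[simp]
theorem iterInt_nil (P : K[X]) : iterInt [] P = P := rfl

@[simp]
theorem derivative_iterInt_cons (c : K) (cs : List K) (P : K[X]) :
    derivative (iterInt (c :: cs) P) = iterInt cs P := by
  simp [iterInt]

@[simp]
theorem eval_iterInt_cons_self (c : K) (cs : List K) (P : K[X]) :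
    (iterInt (c :: cs) P).eval c = 0 := by
  simp [iterInt]

theorem iterate_derivative_iterInt (cs : List K) (P : K[X]) (k : ℕ) :
    derivative^[k] (iterInt cs P) = iterInt (cs.drop k) (derivative^[k - cs.length] P) := by
  induction cs generalizing k with
  | nil => simp
  | cons c cs ih =>
    cases k with
    | zero => simp
    | succ k => simp [Function.iterate_succ_apply, ih]

theorem iterate_derivative_iterInt_of_length_le {cs : List K} (P : K[X]) {k : ℕ}
    (hk : cs.length ≤ k) : derivative^[k] (iterInt cs P) = derivative^[k - cs.length] P := by
  rw [iterate_derivative_iterInt, List.drop_eq_nil_of_le hk, iterInt_nil]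

theorem eval_iterate_derivative_iterInt_getElem (cs : List K) (P : K[X]) {k : ℕ}
    (hk : k < cs.length) : (derivative^[k] (iterInt cs P)).eval cs[k] = 0 := by
  rw [iterate_derivative_iterInt, List.drop_eq_getElem_cons hk, Nat.sub_eq_zero_of_le hk.le]
  exact eval_iterInt_cons_self _ _ _

theorem iterInt_ne_zero (cs : List K) {P : K[X]} (hP : P ≠ 0) : iterInt cs P ≠ 0 := by
  intro h
  apply hP
  simpa [h, iterate_derivative_zero] using (iterate_derivative_iterInt cs P cs.length).symm

theorem natDegree_iterInt (cs : List K) {P : K[X]} (hP : P ≠ 0) :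
    (iterInt cs P).natDegree = P.natDegree + cs.length := by
  induction cs with
  | nil => simp
  | cons c cs ih =>
    rw [natDegree_eq_natDegree_derivative_add_one (by simpa using iterInt_ne_zero cs hP),
      derivative_iterInt_cons, ih, List.length_cons, add_assoc]

theorem iteratedDeriv_eval {𝕜 : Type*} [NontriviallyNormedField 𝕜] (P : 𝕜[X]) (k : ℕ) :
    iteratedDeriv k (fun x => P.eval x) = fun x => (derivative^[k] P).eval x := by
  induction k generalizing P with
  | zero => simp
  | succ k ih =>
    have hderiv : deriv (fun x => P.eval x) = fun x => (derivative P).eval x :=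
      _root_.funext fun _ => P.deriv
    rw [iteratedDeriv_succ', hderiv, ih, Function.iterate_succ_apply]

end Polynomial

open Polynomial

theorem iterIntF_eval (cs : List ℝ) (P : ℝ[X]) :
    iterIntF cs (fun t => P.eval t) = fun x => (iterInt cs P).eval x := by
  induction cs with
  | nil => rfl
  | cons c cs ih =>
    funext x
    have hderiv : ∀ t ∈ uIcc c x,
        HasDerivAt (fun y => (iterInt (c :: cs) P).eval y) ((iterInt cs P).eval t) t :=
      fun t _ => by simpa using (iterInt (c :: cs) P).hasDerivAt t
    simp only [iterIntF, ih]
    rw [intervalIntegral.integral_eq_sub_of_hasDerivAt hderiv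
      ((iterInt cs P).continuous.intervalIntegrable c x), eval_iterInt_cons_self, sub_zero]

noncomputable def sobPoly (ℓ : ℕ) (ω : ℕ → ℝ) (jp : ℕ → ℝ[X]) (n : ℕ) : ℝ[X] :=
  if n < ℓ then iterInt ((List.range n).map ω) 1
  else iterInt ((List.range ℓ).map ω) (jp (n - ℓ))

section sobPoly

variable (ℓ : ℕ) (ω : ℕ → ℝ) (jp : ℕ → ℝ[X])

theorem sobQ_eq_eval (n : ℕ) : sobQ ℓ ω jp n = fun x => (sobPoly ℓ ω jp n).eval x := by
  unfold sobQ sobPoly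
  split_ifs
  · simpa using iterIntF_eval ((List.range n).map ω) 1
  · exact iterIntF_eval _ _

theorem natDegree_sobPoly (hdeg : ∀ n, (jp n).natDegree = n) (hjp : ∀ n, jp n ≠ 0) (n : ℕ) :
    (sobPoly ℓ ω jp n).natDegree = n := by
  unfold sobPoly
  split_ifs with hn
  · simpa using natDegree_iterInt ((List.range n).map ω) one_ne_zero
  · rw [natDegree_iterInt _ (hjp _), hdeg]
    simp only [List.length_map, List.length_range]
    omega

theorem eval_iterate_derivative_iterInt_range_map (P : ℝ[X]) {k n : ℕ} (hk : k < n) :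
    (derivative^[k] (iterInt ((List.range n).map ω) P)).eval (ω k) = 0 := by
  have h := eval_iterate_derivative_iterInt_getElem ((List.range n).map ω) P
    (k := k) (by simpa using hk)
  rwa [List.getElem_map, List.getElem_range] at h

theorem eval_iterate_derivative_sobPoly_node {k : ℕ} (hk : k < ℓ) (n : ℕ) :
    (derivative^[k] (sobPoly ℓ ω jp n)).eval (ω k) = if k = n then 1 else 0 := by
  unfold sobPoly
  split_ifs with hn hkn hkn
  · subst hkn
    simp [iterate_derivative_iterInt_of_length_le]
  · rcases lt_or_gt_of_ne hkn with hlt | hgt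
    · exact eval_iterate_derivative_iterInt_range_map ω 1 hlt
    · simp [iterate_derivative_iterInt_of_length_le, hgt.le,
        iterate_derivative_one (Nat.sub_pos_of_lt hgt)]
  · omega
  · exact eval_iterate_derivative_iterInt_range_map ω _ hk

theorem iterate_derivative_sobPoly_length (n : ℕ) :
    derivative^[ℓ] (sobPoly ℓ ω jp n) = if n < ℓ then 0 else jp (n - ℓ) := by
  unfold sobPoly
  split_ifs with hn
  · simp [iterate_derivative_iterInt_of_length_le, hn.le,
      iterate_derivative_one (Nat.sub_pos_of_lt hn)]
  · simp [iterate_derivative_iterInt_of_length_le]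

end sobPoly

theorem stmt_13_general (α β : ℝ) (ℓ : ℕ)
    (ω : ℕ → ℝ) (jp : ℕ → Polynomial ℝ)
    (hdeg : ∀ n, (jp n).natDegree = n)
    (horth : ∀ m n, (∫ x in Set.Ioo (-1 : ℝ) 1,
        (jp m).eval x * (jp n).eval x * ((1 - x) ^ α * (1 + x) ^ β)) =
      if m = n then 1 else 0) :
    (∀ n, ∃ P : Polynomial ℝ, P.natDegree = n ∧ ∀ x, sobQ ℓ ω jp n x = P.eval x) ∧
    (∀ m n,
      (∑ k ∈ Finset.range ℓ,
          iteratedDeriv k (sobQ ℓ ω jp m) (ω k) * iteratedDeriv k (sobQ ℓ ω jp n) (ω k)) +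
        (∫ x in Set.Ioo (-1 : ℝ) 1,
          iteratedDeriv ℓ (sobQ ℓ ω jp m) x * iteratedDeriv ℓ (sobQ ℓ ω jp n) x *
            ((1 - x) ^ α * (1 + x) ^ β)) =
      if m = n then 1 else 0) := by
  have hjp : ∀ n, jp n ≠ 0 := fun n h => by simpa [h] using horth n n
  refine ⟨fun n => ⟨sobPoly ℓ ω jp n, natDegree_sobPoly ℓ ω jp hdeg hjp n,
    fun x => by rw [sobQ_eq_eval]⟩, fun m n => ?_⟩
  simp only [sobQ_eq_eval, iteratedDeriv_eval, iterate_derivative_sobPoly_length]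
  rw [Finset.sum_congr rfl fun k hk => by
    rw [eval_iterate_derivative_sobPoly_node ℓ ω jp (Finset.mem_range.mp hk),
      eval_iterate_derivative_sobPoly_node ℓ ω jp (Finset.mem_range.mp hk)]]
  simp only [ite_mul, one_mul, zero_mul, Finset.sum_ite_eq', Finset.mem_range]
  split_ifs <;> simp_all
  omega

theorem stmt_13 (α β : ℝ) (hα : -1 < α) (hβ : -1 < β) (ℓ : ℕ) (hℓ : 1 ≤ ℓ)
    (ω : ℕ → ℝ) (jp : ℕ → Polynomial ℝ)
    (hdeg : ∀ n, (jp n).natDegree = n)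
    (horth : ∀ m n, (∫ x in Set.Ioo (-1 : ℝ) 1,
        (jp m).eval x * (jp n).eval x * ((1 - x) ^ α * (1 + x) ^ β)) =
      if m = n then 1 else 0) :
    (∀ n, ∃ P : Polynomial ℝ, P.natDegree = n ∧ ∀ x, sobQ ℓ ω jp n x = P.eval x) ∧
    (∀ m n,
      (∑ k ∈ Finset.range ℓ,
          iteratedDeriv k (sobQ ℓ ω jp m) (ω k) * iteratedDeriv k (sobQ ℓ ω jp n) (ω k)) +
        (∫ x in Set.Ioo (-1 : ℝ) 1,
          iteratedDeriv ℓ (sobQ ℓ ω jp m) x * iteratedDeriv ℓ (sobQ ℓ ω jp n) x *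
            ((1 - x) ^ α * (1 + x) ^ β)) =
      if m = n then 1 else 0) :=
  stmt_13_general α β ℓ ω jp hdeg horth
end

section
/- Let S_n^S(f,·) = Σ_{k=0}^n ⟨f, q_k⟩_S q_k be the n-th partial sum of the Fourier–Sobolev series. Then for 0 ≤ k ≤ ℓ-1, the k-th derivative satisfies (S_n^S)^{(k)}(f, ω_k) = f^{(k)}(ω_k) if n ≥ k and 0 if n < k; and for n ≥ ℓ, (S_n^S)^{(ℓ)}(f, x) = S_{n-ℓ}^{α,β}(f^{(ℓ)}, x), where S_m^{α,β}(g,·) = Σ_{j=0}^m ⟨g, p_j^{α,β}⟩_{L²(μ^{α,β})} p_j^{α,β} is the m-th Jacobi–Fourier partial sum. -/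
open Set MeasureTheory Finset

/-- The Jacobi weight. -/
noncomputable def jacW (α β x : ℝ) : ℝ := (1 - x) ^ α * (1 + x) ^ β

/-- The discrete-continuous Jacobi-Sobolev inner product. -/
noncomputable def sobIP (α β : ℝ) (ℓ : ℕ) (ω : ℕ → ℝ) (f g : ℝ → ℝ) : ℝ :=
  (∑ k ∈ Finset.range ℓ, iteratedDeriv k f (ω k) * iteratedDeriv k g (ω k)) +
    ∫ x in Set.Ioo (-1 : ℝ) 1, iteratedDeriv ℓ f x * iteratedDeriv ℓ g x * jacW α β x

/-- The `n`-th partial sum of the Fourier–Sobolev series of `f`. -/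
noncomputable def sobPartialSum (α β : ℝ) (ℓ : ℕ) (ω : ℕ → ℝ) (q : ℕ → ℝ → ℝ)
    (f : ℝ → ℝ) (n : ℕ) : ℝ → ℝ :=
  fun x => ∑ k ∈ Finset.range (n + 1), sobIP α β ℓ ω f (q k) * q k x

/-- The `j`-th Jacobi–Fourier coefficient of `g`. -/
noncomputable def jacCoef (α β : ℝ) (jp : ℕ → Polynomial ℝ) (g : ℝ → ℝ) (j : ℕ) : ℝ :=
  ∫ x in Set.Ioo (-1 : ℝ) 1, g x * (jp j).eval x * jacW α β x

/-- The `m`-th partial sum of the Jacobi–Fourier series of `g`. -/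
noncomputable def jacPartialSum (α β : ℝ) (jp : ℕ → Polynomial ℝ) (g : ℝ → ℝ)
    (m : ℕ) : ℝ → ℝ :=
  fun x => ∑ j ∈ Finset.range (m + 1), jacCoef α β jp g j * (jp j).eval x

/-!
Differentiation commutes with the finite sum defining the partial sum, so everything reduces to
the Sobolev coefficients `⟨f, q_j⟩_S`. For `j < ℓ` the discrete part of the inner product picks
out `f^{(j)}(ω_j)` and the integral vanishes; for `j ≥ ℓ` the discrete part vanishes and the
integral is the Jacobi coefficient of `f^{(ℓ)}` of index `j - ℓ`.
-/

variable {α β : ℝ} {ℓ : ℕ} {ω : ℕ → ℝ} {q : ℕ → ℝ → ℝ} {f g : ℝ → ℝ}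

lemma Polynomial.contDiff_eval (P : Polynomial ℝ) (n : WithTop ℕ∞) :
    ContDiff ℝ n fun x => P.eval x := by
  simpa using P.contDiff_aeval (𝕜 := ℝ) n

lemma iteratedDeriv_sobPartialSum {k : ℕ} (hq : ∀ j, ContDiff ℝ k (q j)) (n : ℕ) (x : ℝ) :
    iteratedDeriv k (sobPartialSum α β ℓ ω q f n) x =
      ∑ j ∈ range (n + 1), sobIP α β ℓ ω f (q j) * iteratedDeriv k (q j) x := by
  unfold sobPartialSum
  rw [iteratedDeriv_fun_sum fun j _ => (contDiff_const.mul (hq j)).contDiffAt]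
  simp only [iteratedDeriv_const_mul_field]

lemma sobIP_eq_iteratedDeriv_of_lt {j : ℕ} (hj : j < ℓ)
    (hg_der : ∀ k < ℓ, iteratedDeriv k g (ω k) = if k = j then 1 else 0)
    (hg_top : ∀ x, iteratedDeriv ℓ g x = 0) :
    sobIP α β ℓ ω f g = iteratedDeriv j f (ω j) := by
  have hsum : ∑ k ∈ range ℓ, iteratedDeriv k f (ω k) * iteratedDeriv k g (ω k) =
      iteratedDeriv j f (ω j) := by
    rw [sum_eq_single_of_mem j (mem_range.2 hj)
      fun k hk hkj => by simp [hg_der k (mem_range.1 hk), hkj]]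
    simp [hg_der j hj]
  simp [sobIP, hsum, hg_top]

lemma sobIP_eq_jacCoef (jp : ℕ → Polynomial ℝ) {m : ℕ}
    (hg_der : ∀ k < ℓ, iteratedDeriv k g (ω k) = 0)
    (hg_top : ∀ x, iteratedDeriv ℓ g x = (jp m).eval x) :
    sobIP α β ℓ ω f g = jacCoef α β jp (iteratedDeriv ℓ f) m := by
  have hsum : ∑ k ∈ range ℓ, iteratedDeriv k f (ω k) * iteratedDeriv k g (ω k) = 0 :=
    sum_eq_zero fun k hk => by simp [hg_der k (mem_range.1 hk)]
  simp [sobIP, jacCoef, hsum, hg_top]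

lemma iteratedDeriv_sobPartialSum_node {k : ℕ} (hk : k < ℓ) (hq : ∀ j, ContDiff ℝ k (q j))
    (hq_low_der : ∀ n < ℓ, ∀ k < ℓ, iteratedDeriv k (q n) (ω k) = if k = n then 1 else 0)
    (hq_low_top : ∀ n < ℓ, ∀ x, iteratedDeriv ℓ (q n) x = 0)
    (hq_high_der : ∀ n, ℓ ≤ n → ∀ k < ℓ, iteratedDeriv k (q n) (ω k) = 0) (n : ℕ) :
    iteratedDeriv k (sobPartialSum α β ℓ ω q f n) (ω k) =
      if k ≤ n then iteratedDeriv k f (ω k) else 0 := by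
  have hterm : ∀ j, sobIP α β ℓ ω f (q j) * iteratedDeriv k (q j) (ω k) =
      if k = j then iteratedDeriv k f (ω k) else 0 := by
    intro j
    rcases lt_or_ge j ℓ with hj | hj
    · rw [sobIP_eq_iteratedDeriv_of_lt hj (hq_low_der j hj) (hq_low_top j hj),
        hq_low_der j hj k hk]
      rcases eq_or_ne k j with rfl | hkj
      · simp
      · simp [hkj]
    · rw [hq_high_der j hj k hk, if_neg (by omega), mul_zero]
  simp only [iteratedDeriv_sobPartialSum hq, hterm, sum_ite_eq, Finset.mem_range,
    Nat.lt_add_one_iff]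

lemma iteratedDeriv_sobPartialSum_eq_jacPartialSum (jp : ℕ → Polynomial ℝ)
    (hq : ∀ j, ContDiff ℝ ℓ (q j))
    (hq_low_top : ∀ n < ℓ, ∀ x, iteratedDeriv ℓ (q n) x = 0)
    (hq_high_der : ∀ n, ℓ ≤ n → ∀ k < ℓ, iteratedDeriv k (q n) (ω k) = 0)
    (hq_high_top : ∀ n, ℓ ≤ n → ∀ x, iteratedDeriv ℓ (q n) x = (jp (n - ℓ)).eval x)
    {n : ℕ} (hn : ℓ ≤ n) (x : ℝ) :
    iteratedDeriv ℓ (sobPartialSum α β ℓ ω q f n) x =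
      jacPartialSum α β jp (iteratedDeriv ℓ f) (n - ℓ) x := by
  rw [iteratedDeriv_sobPartialSum hq, show n + 1 = ℓ + (n - ℓ + 1) by omega, sum_range_add,
    sum_eq_zero fun j hj => by rw [hq_low_top j (mem_range.1 hj), mul_zero], zero_add]
  refine sum_congr rfl fun i _ => ?_
  have hi : ℓ ≤ ℓ + i := le_add_right le_rfl
  rw [sobIP_eq_jacCoef jp (hq_high_der _ hi) (hq_high_top _ hi), hq_high_top _ hi,
    Nat.add_sub_cancel_left]

theorem stmt_15_general (α β : ℝ) (ℓ : ℕ)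
    (ω : ℕ → ℝ) (jp : ℕ → Polynomial ℝ) (q : ℕ → ℝ → ℝ)
    (hq_poly : ∀ n, ∃ P : Polynomial ℝ, q n = fun x => P.eval x)
    (hq_low_der : ∀ n < ℓ, ∀ k < ℓ,
      iteratedDeriv k (q n) (ω k) = if k = n then 1 else 0)
    (hq_low_top : ∀ n < ℓ, ∀ x : ℝ, iteratedDeriv ℓ (q n) x = 0)
    (hq_high_der : ∀ n, ℓ ≤ n → ∀ k < ℓ, iteratedDeriv k (q n) (ω k) = 0)
    (hq_high_top : ∀ n, ℓ ≤ n → ∀ x : ℝ,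
      iteratedDeriv ℓ (q n) x = (jp (n - ℓ)).eval x)
    (f : ℝ → ℝ) :
    (∀ n : ℕ, ∀ k < ℓ,
      iteratedDeriv k (sobPartialSum α β ℓ ω q f n) (ω k) =
        if k ≤ n then iteratedDeriv k f (ω k) else 0) ∧
    (∀ n : ℕ, ℓ ≤ n → ∀ x : ℝ,
      iteratedDeriv ℓ (sobPartialSum α β ℓ ω q f n) x =
        jacPartialSum α β jp (iteratedDeriv ℓ f) (n - ℓ) x) := by
  have hq : ∀ (k : ℕ) j, ContDiff ℝ k (q j) := fun k j => by
    obtain ⟨P, hP⟩ := hq_poly j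
    exact hP ▸ P.contDiff_eval k
  exact ⟨fun n k hk => iteratedDeriv_sobPartialSum_node hk (hq k) hq_low_der hq_low_top
      hq_high_der n,
    fun n hn x => iteratedDeriv_sobPartialSum_eq_jacPartialSum jp (hq ℓ) hq_low_top hq_high_der
      hq_high_top hn x⟩

theorem stmt_15 (α β : ℝ) (hα : -1 < α) (hβ : -1 < β) (ℓ : ℕ) (hℓ : 1 ≤ ℓ)
    (ω : ℕ → ℝ) (jp : ℕ → Polynomial ℝ) (q : ℕ → ℝ → ℝ)
    (hq_poly : ∀ n, ∃ P : Polynomial ℝ, q n = fun x => P.eval x)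
    (hq_low_der : ∀ n < ℓ, ∀ k < ℓ,
      iteratedDeriv k (q n) (ω k) = if k = n then 1 else 0)
    (hq_low_top : ∀ n < ℓ, ∀ x : ℝ, iteratedDeriv ℓ (q n) x = 0)
    (hq_high_der : ∀ n, ℓ ≤ n → ∀ k < ℓ, iteratedDeriv k (q n) (ω k) = 0)
    (hq_high_top : ∀ n, ℓ ≤ n → ∀ x : ℝ,
      iteratedDeriv ℓ (q n) x = (jp (n - ℓ)).eval x)
    (f : ℝ → ℝ)
    (hf : IntegrableOn (fun x : ℝ => iteratedDeriv ℓ f x * jacW α β x)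
      (Set.Ioo (-1 : ℝ) 1)) :
    (∀ n : ℕ, ∀ k < ℓ,
      iteratedDeriv k (sobPartialSum α β ℓ ω q f n) (ω k) =
        if k ≤ n then iteratedDeriv k f (ω k) else 0) ∧
    (∀ n : ℕ, ℓ ≤ n → ∀ x : ℝ,
      iteratedDeriv ℓ (sobPartialSum α β ℓ ω q f n) x =
        jacPartialSum α β jp (iteratedDeriv ℓ f) (n - ℓ) x) :=
  stmt_15_general α β ℓ ω jp q hq_poly hq_low_der hq_low_top hq_high_der hq_high_top f
end
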